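/- Let μ : ℤⁿ → ℤᵐ be an injective homomorphism such that the torsion subgroup of coker(μ) has odd order. If θ is an n×n integer matrix such that μθμᵀ = κ + κᵀ for some m×m integer matrix κ, then there exists an n×n integer matrix κ' with θ = κ' + κ'ᵀ. Equivalently, the induced map Q_{−ε}(ℤⁿ) → Q_{−ε}(ℤᵐ), [θ] ↦ [μθμᵀ] (for ε = −1, i.e. modding by matrices of the form κ + κᵀ) is injective. -/
import Mathlib

open Finset

private lemma zmod2_mul_self (x : ZMod 2) : x * x = x := by revert x; decide

/-- Let `μ : ℤⁿ → ℤᵐ` be an injective homomorphism such that the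
torsion subgroup of `coker μ` has odd order.  If `θ` is an `n × n` integer matrix
with `μ θ μᵀ = κ + κᵀ` for some `m × m` integer matrix `κ`, then there exists an
`n × n` integer matrix `κ'` with `θ = κ' + κ'ᵀ`; i.e. the induced map
`Matₙ(ℤ)/{κ + κᵀ} → Matₘ(ℤ)/{κ + κᵀ}`, `[θ] ↦ [μθμᵀ]`, is injective. -/
theorem stmt_16 (m n : ℕ) (μ : Matrix (Fin m) (Fin n) ℤ)
    (hinj : Function.Injective μ.mulVecLin)
    (hodd : Odd (Nat.card
      (Submodule.torsion ℤ ((Fin m → ℤ) ⧸ LinearMap.range μ.mulVecLin)))) :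
    ∀ θ : Matrix (Fin n) (Fin n) ℤ,
      (∃ κ : Matrix (Fin m) (Fin m) ℤ, μ * θ * μ.transpose = κ + κ.transpose) →
      ∃ κ' : Matrix (Fin n) (Fin n) ℤ, θ = κ' + κ'.transpose := by
  rintro θ ⟨κ, hκ⟩
  -- cancellation: μ * X = 0 → X = 0
  have hcancel : ∀ (p : ℕ) (X : Matrix (Fin n) (Fin p) ℤ), μ * X = 0 → X = 0 := by
    intro p X hX
    ext k j
    have h0 : μ.mulVec (fun k => X k j) = 0 := by
      funext i
      have := congrFun (congrFun hX i) j
      simpa [Matrix.mul_apply, Matrix.mulVec, dotProduct] using this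
    have h1 : (fun k => X k j) = (0 : Fin n → ℤ) := by
      apply hinj
      simpa [Matrix.mulVecLin_apply] using h0
    simpa using congrFun h1 k
  -- θ is symmetric
  have hsymm : θ.transpose = θ := by
    have h1 : μ * θ * μ.transpose = μ * θ.transpose * μ.transpose := by
      calc μ * θ * μ.transpose = κ + κ.transpose := hκ
        _ = (κ + κ.transpose).transpose := by
            rw [Matrix.transpose_add, Matrix.transpose_transpose, add_comm]
        _ = (μ * θ * μ.transpose).transpose := by rw [hκ]
        _ = μ * θ.transpose * μ.transpose := by
            rw [Matrix.transpose_mul, Matrix.transpose_mul, Matrix.transpose_transpose,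
              Matrix.mul_assoc]
    have h2 : μ * ((θ - θ.transpose) * μ.transpose) = 0 := by
      rw [Matrix.sub_mul, Matrix.mul_sub, ← Matrix.mul_assoc, ← Matrix.mul_assoc, h1, sub_self]
    have h3 : (θ - θ.transpose) * μ.transpose = 0 := hcancel m _ h2
    have h4 : μ * (θ - θ.transpose).transpose = 0 := by
      have := congrArg Matrix.transpose h3
      simpa [Matrix.transpose_mul] using this
    have h5 : (θ - θ.transpose).transpose = 0 := hcancel n _ h4
    have h6 : θ - θ.transpose = 0 := by
      have := congrArg Matrix.transpose h5
      simpa using this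
    have := sub_eq_zero.mp h6
    exact this.symm
  have hsym' : ∀ a b, θ a b = θ b a := by
    intro a b
    have := congrFun (congrFun hsymm b) a
    simpa [Matrix.transpose_apply] using this
  -- the diagonal vector
  set d : Fin n → ℤ := fun k => θ k k with hd
  -- each entry of μ.mulVec d is even
  have hdvd : ∀ i, (2 : ℤ) ∣ μ.mulVec d i := by
    intro i
    have hik := congrFun (congrFun hκ i) i
    have h := congrArg (fun z : ℤ => (z : ZMod 2)) hik
    simp only [Matrix.mul_apply, Matrix.add_apply, Matrix.transpose_apply] at h
    push_cast at h
    rw [CharTwo.add_self_eq_zero] at h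
    simp only [Finset.sum_mul] at h
    -- h : ∑ x, ∑ k, ↑(μ i k) * ↑(θ k x) * ↑(μ i x) = 0
    set F : Fin n × Fin n → ZMod 2 :=
      fun p => ((μ i p.2 : ZMod 2)) * ((θ p.2 p.1 : ZMod 2)) * ((μ i p.1 : ZMod 2)) with hF
    have hprod : ∑ p ∈ (univ ×ˢ univ), F p = 0 := by
      rw [Finset.sum_product]; exact h
    have hoff : ∑ p ∈ (univ ×ˢ univ).filter (fun p => ¬ p.1 = p.2), F p = 0 := by
      apply Finset.sum_involution (fun p _ => Prod.swap p)
      · intro p hp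
        have heq : F (Prod.swap p) = F p := by
          simp only [hF, Prod.fst_swap, Prod.snd_swap]
          rw [hsym' p.1 p.2]
          ring
        rw [heq, CharTwo.add_self_eq_zero]
      · intro p hp _
        simp only [Finset.mem_filter] at hp
        intro e
        exact hp.2 ((congrArg Prod.fst e).symm)
      · intro p hp
        simp only [Finset.mem_filter, Finset.mem_product, Finset.mem_univ, true_and,
          Prod.fst_swap, Prod.snd_swap] at hp ⊢
        exact fun e => hp (e.symm)
      · intro p hp
        exact Prod.swap_swap p
    have hdiag : ∑ p ∈ (univ ×ˢ univ).filter (fun p => p.1 = p.2), F p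
        = ∑ k : Fin n, ((μ i k : ZMod 2)) * ((θ k k : ZMod 2)) := by
      rw [Finset.sum_filter, Finset.sum_product]
      simp only [hF]
      rw [Finset.sum_congr rfl (fun x _ => Finset.sum_ite_eq (univ : Finset (Fin n)) x
        (fun k => ((μ i k : ZMod 2)) * ((θ k x : ZMod 2)) * ((μ i x : ZMod 2))))]
      simp only [Finset.mem_univ, if_true]
      exact Finset.sum_congr rfl fun k _ => by rw [mul_right_comm, zmod2_mul_self]
    have hsum0 : ∑ k : Fin n, ((μ i k : ZMod 2)) * ((θ k k : ZMod 2)) = 0 := by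
      have := Finset.sum_filter_add_sum_filter_not (univ ×ˢ univ) (fun p => p.1 = p.2) F
      rw [hprod, hoff, add_zero, hdiag] at this
      exact this
    have hcast : ((μ.mulVec d i : ℤ) : ZMod 2) = 0 := by
      have : μ.mulVec d i = ∑ k, μ i k * θ k k := by
        simp [Matrix.mulVec, dotProduct, hd]
      rw [this]
      push_cast
      exact hsum0
    have := (ZMod.intCast_zmod_eq_zero_iff_dvd _ 2).mp hcast
    exact_mod_cast this
  -- torsion argument: d itself is even
  have hdvd' : ∀ i, ∃ c, μ.mulVec d i = 2 * c := fun i => hdvd i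
  choose w hw using hdvd'
  set C := (Fin m → ℤ) ⧸ LinearMap.range μ.mulVecLin with hC
  set y : C := Submodule.Quotient.mk w with hy
  have hy2 : (2 : ℤ) • y = 0 := by
    rw [hy, ← Submodule.Quotient.mk_smul]
    have h2w : (2 : ℤ) • w = μ.mulVec d := by
      funext i
      simp [Pi.smul_apply, smul_eq_mul, (hw i).symm]
    rw [h2w]
    exact (Submodule.Quotient.mk_eq_zero _).mpr ⟨d, rfl⟩
  have hymem : y ∈ Submodule.torsion ℤ C :=
    ⟨⟨2, mem_nonZeroDivisors_of_ne_zero two_ne_zero⟩, hy2⟩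
  set x : Submodule.torsion ℤ C := ⟨y, hymem⟩ with hx
  have hx2 : (2 : ℕ) • x = 0 := by
    apply Subtype.ext
    show (2 : ℕ) • y = 0
    rw [← Nat.cast_smul_eq_nsmul ℤ]
    exact_mod_cast hy2
  have hord2 : addOrderOf x ∣ 2 := addOrderOf_dvd_iff_nsmul_eq_zero.mpr hx2
  have hordcard : addOrderOf x ∣ Nat.card (Submodule.torsion ℤ C) := addOrderOf_dvd_natCard x
  have hcop : Nat.gcd 2 (Nat.card (Submodule.torsion ℤ C)) = 1 :=
    Nat.coprime_two_left.mpr hodd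
  have hord1 : addOrderOf x = 1 :=
    Nat.dvd_one.mp (hcop ▸ Nat.dvd_gcd hord2 hordcard)
  have hx0 : x = 0 := AddMonoid.addOrderOf_eq_one_iff.mp hord1
  have hy0 : y = 0 := congrArg Subtype.val hx0
  obtain ⟨u, hu⟩ := (Submodule.Quotient.mk_eq_zero _).mp hy0
  have hdu : d = (2 : ℤ) • u := by
    apply hinj
    rw [map_smul, hu]
    funext i
    simp only [Matrix.mulVecLin_apply, Pi.smul_apply, smul_eq_mul]
    exact hw i
  -- construct κ'
  refine ⟨Matrix.of fun i j => if i < j then θ i j else if i = j then u i else 0, ?_⟩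
  ext i j
  simp only [Matrix.add_apply, Matrix.transpose_apply, Matrix.of_apply]
  rcases lt_trichotomy i j with h | h | h
  · rw [if_pos h, if_neg (asymm h), if_neg h.ne', add_zero]
  · subst h
    rw [if_neg (lt_irrefl i), if_pos rfl]
    have := congrFun hdu i
    simp only [hd, Pi.smul_apply, smul_eq_mul] at this
    rw [this]; ring
  · rw [if_neg (asymm h), if_neg h.ne', if_pos h, zero_add]
    exact hsym' i j
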